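/- arXiv:0809.0360 — 2 statements merged into one kernel-verified Lean document; each statement's English description precedes it below -/
import Mathlib

section
/- If a sentence of the full graded μ-calculus is satisfiable, then it has a tree model. -/
/-! ### Syntax and semantics of the fully enriched μ-calculus -/

/-- Programs: atomic programs and their inverses. -/
inductive Prg (Pr : Type) where
  | atom (a : Pr)
  | inv (a : Pr)

/-- Formulas of the fully enriched μ-calculus in positive normal form,
over atomic propositions `P`, nominals `N`, variables `V` and atomic programs `Pr`. -/
inductive Fml (P N V Pr : Type) where
  | tt
  | ff
  | prop (p : P)
  | nprop (p : P)
  | nom (o : N)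
  | nnom (o : N)
  | var (x : V)
  | or (φ ψ : Fml P N V Pr)
  | and (φ ψ : Fml P N V Pr)
  | atleast (n : ℕ) (α : Prg Pr) (φ : Fml P N V Pr)
  | allbut (n : ℕ) (α : Prg Pr) (φ : Fml P N V Pr)
  | mu (y : V) (φ : Fml P N V Pr)
  | nu (y : V) (φ : Fml P N V Pr)

namespace Fml

variable {P N V Pr : Type}

/-- Free variables of a formula. -/
def free : Fml P N V Pr → Set V
  | .var x => {x}
  | .or φ ψ => φ.free ∪ ψ.free
  | .and φ ψ => φ.free ∪ ψ.free
  | .atleast _ _ φ => φ.free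
  | .allbut _ _ φ => φ.free
  | .mu y φ => φ.free \ {y}
  | .nu y φ => φ.free \ {y}
  | _ => ∅

/-- A sentence is a formula without free variables. -/
def IsSentence (φ : Fml P N V Pr) : Prop := φ.free = ∅

/-- The formula contains no nominals (full graded μ-calculus). -/
def NoNom : Fml P N V Pr → Prop
  | .nom _ => False
  | .nnom _ => False
  | .or φ ψ => φ.NoNom ∧ ψ.NoNom
  | .and φ ψ => φ.NoNom ∧ ψ.NoNom
  | .atleast _ _ φ => φ.NoNom
  | .allbut _ _ φ => φ.NoNom
  | .mu _ φ => φ.NoNom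
  | .nu _ φ => φ.NoNom
  | _ => True

/-- A program is atomic (not an inverse program). -/
def _root_.Prg.IsAtom : Prg Pr → Prop
  | .atom _ => True
  | .inv _ => False

/-- The formula contains no inverse programs (hybrid graded μ-calculus). -/
def NoInv : Fml P N V Pr → Prop
  | .or φ ψ => φ.NoInv ∧ ψ.NoInv
  | .and φ ψ => φ.NoInv ∧ ψ.NoInv
  | .atleast _ α φ => α.IsAtom ∧ φ.NoInv
  | .allbut _ α φ => α.IsAtom ∧ φ.NoInv
  | .mu _ φ => φ.NoInv
  | .nu _ φ => φ.NoInv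
  | _ => True

/-- Atomic propositions occurring in a formula. -/
def props : Fml P N V Pr → Set P
  | .prop p => {p}
  | .nprop p => {p}
  | .or φ ψ => φ.props ∪ ψ.props
  | .and φ ψ => φ.props ∪ ψ.props
  | .atleast _ _ φ => φ.props
  | .allbut _ _ φ => φ.props
  | .mu _ φ => φ.props
  | .nu _ φ => φ.props
  | _ => ∅

/-- Nominals occurring in a formula. -/
def noms : Fml P N V Pr → Set N
  | .nom o => {o}
  | .nnom o => {o}
  | .or φ ψ => φ.noms ∪ ψ.noms
  | .and φ ψ => φ.noms ∪ ψ.noms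
  | .atleast _ _ φ => φ.noms
  | .allbut _ _ φ => φ.noms
  | .mu _ φ => φ.noms
  | .nu _ φ => φ.noms
  | _ => ∅

/-- Programs occurring in a formula. -/
def prgs : Fml P N V Pr → Set (Prg Pr)
  | .or φ ψ => φ.prgs ∪ ψ.prgs
  | .and φ ψ => φ.prgs ∪ ψ.prgs
  | .atleast _ α φ => insert α φ.prgs
  | .allbut _ α φ => insert α φ.prgs
  | .mu _ φ => φ.prgs
  | .nu _ φ => φ.prgs
  | _ => ∅

end Fml

/-- `CardGT s n`: the set `s` has more than `n` elements. -/
def CardGT {α : Type*} (s : Set α) (n : ℕ) : Prop :=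
  ∃ t : Finset α, ↑t ⊆ s ∧ n < t.card

/-- `CardLE s n`: the set `s` has at most `n` elements. -/
def CardLE {α : Type*} (s : Set α) (n : ℕ) : Prop :=
  ∃ t : Finset α, s ⊆ ↑t ∧ t.card ≤ n

/-- A Kripke structure over a nonempty state set `W`, with accessibility relations for
atomic programs, an interpretation of atomic propositions, and (singleton-valued)
interpretation of nominals given by the designated state `nomVal o`. -/
structure Kripke (P N Pr W : Type) where
  ne : Nonempty W
  R : Pr → W → W → Prop
  L : P → Set W
  nomVal : N → W

namespace Kripke

variable {P N V Pr W : Type}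

/-- Extension of the accessibility relations to programs, with `R(a⁻) = R(a)⁻¹`. -/
def rel (K : Kripke P N Pr W) : Prg Pr → W → W → Prop
  | .atom a => K.R a
  | .inv a => fun w v => K.R a v w

open Classical in
/-- The semantics `φ^K(𝓥)` of a formula relative to a valuation of its free variables. -/
noncomputable def sat (K : Kripke P N Pr W) : Fml P N V Pr → (V → Set W) → Set W
  | .tt, _ => Set.univ
  | .ff, _ => ∅
  | .prop p, _ => K.L p
  | .nprop p, _ => (K.L p)ᶜ
  | .nom o, _ => {K.nomVal o}
  | .nnom o, _ => {K.nomVal o}ᶜ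
  | .var x, 𝓥 => 𝓥 x
  | .or φ ψ, 𝓥 => K.sat φ 𝓥 ∪ K.sat ψ 𝓥
  | .and φ ψ, 𝓥 => K.sat φ 𝓥 ∩ K.sat ψ 𝓥
  | .atleast n α φ, 𝓥 => {w | CardGT {u | K.rel α w u ∧ u ∈ K.sat φ 𝓥} n}
  | .allbut n α φ, 𝓥 => {w | CardLE {u | K.rel α w u ∧ u ∉ K.sat φ 𝓥} n}
  | .mu y φ, 𝓥 => ⋂₀ {S : Set W | K.sat φ (fun z => if z = y then S else 𝓥 z) ⊆ S}
  | .nu y φ, 𝓥 => ⋃₀ {S : Set W | S ⊆ K.sat φ (fun z => if z = y then S else 𝓥 z)}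

end Kripke

/-- `K, w ⊨ φ` for a sentence `φ`: `w ∈ φ^K(∅)`. -/
def Models {P N V Pr W : Type} (K : Kripke P N Pr W) (w : W) (φ : Fml P N V Pr) : Prop :=
  w ∈ K.sat φ (fun _ => ∅)

/-- A sentence is satisfiable if it holds at some state of some Kripke structure. -/
def Satisfiable {P N V Pr : Type} (φ : Fml P N V Pr) : Prop :=
  ∃ (W : Type) (K : Kripke P N Pr W) (w : W), Models K w φ
/-! ### Forests and trees of nodes (nonempty finite words over ℕ) -/

/-- Nodes of forests: finite words over ℕ (the forest condition requires nonemptiness). -/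
abbrev Node := List ℕ

/-- `y` is a child (successor) of `x`: `y = x·c` for some `c ∈ ℕ`. -/
def IsChild (x y : Node) : Prop := ∃ c : ℕ, y = x ++ [c]

/-- A forest: a set of nonempty words over ℕ closed under nonempty prefixes. -/
def IsForest (F : Set Node) : Prop :=
  (∀ x ∈ F, x ≠ []) ∧ (∀ x y : Node, y ∈ F → IsChild x y → x ≠ [] → x ∈ F)

/-- The roots of a forest are its length-one elements. -/
def IsRootNode (x : Node) : Prop := x.length = 1

/-- A tree: a nonempty forest all of whose elements start with the same letter. -/
def IsTree (T : Set Node) : Prop :=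
  IsForest T ∧ T.Nonempty ∧ ∃ c : ℕ, ∀ x ∈ T, x.head? = some c
/-! ### Tree, forest and quasi-forest structures -/

section Structures

variable {P N Pr : Type}

/-- A forest structure: the state set is a forest and the union of all program relations
(including inverses) is exactly the parent–child/child–parent adjacency. -/
def IsForestStructure (F : Set Node) (K : Kripke P N Pr {x : Node // x ∈ F}) : Prop :=
  IsForest F ∧
  ∀ x y : {x : Node // x ∈ F},
    (∃ α : Prg Pr, K.rel α x y) ↔ (IsChild x.val y.val ∨ IsChild y.val x.val)

/-- A tree structure: the state set is a tree and the union of all program relations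
(including inverses) is exactly the parent–child/child–parent adjacency. -/
def IsTreeStructure (T : Set Node) (K : Kripke P N Pr {x : Node // x ∈ T}) : Prop :=
  IsTree T ∧
  ∀ x y : {x : Node // x ∈ T},
    (∃ α : Prg Pr, K.rel α x y) ↔ (IsChild x.val y.val ∨ IsChild y.val x.val)

/-- A directed forest structure: a forest structure in which every `R(a)`-edge
(`a` atomic) goes from a node to one of its successors. -/
def IsDirectedForestStructure (F : Set Node) (K : Kripke P N Pr {x : Node // x ∈ F}) : Prop :=
  IsForestStructure F K ∧
  ∀ (a : Pr) (x y : {x : Node // x ∈ F}), K.R a x y → IsChild x.val y.val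

/-- The structure obtained by deleting all edges entering a root. -/
def delRootEdges (F : Set Node) (K : Kripke P N Pr {x : Node // x ∈ F}) :
    Kripke P N Pr {x : Node // x ∈ F} :=
  { K with R := fun a x y => K.R a x y ∧ ¬ IsRootNode y.val }

/-- A directed quasi-forest structure: deleting all edges entering a root
yields a directed forest structure. -/
def IsDirectedQuasiForestStructure (F : Set Node)
    (K : Kripke P N Pr {x : Node // x ∈ F}) : Prop :=
  IsDirectedForestStructure F (delRootEdges F K)

end Structures

/-!
Trees over `ℕ` branch countably, so the proof has two steps.

First, a satisfiable sentence without nominals has a countable model. Close a satisfying state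
under Skolem witnesses: for each graded modality finitely many successors witnessing the count,
and for each fixpoint the least approximant stage at which a state enters the least fixpoint or
drops out of the greatest one. A Tarski–Vaught argument by induction on formulas, in which
the fixpoint variables range over these countably many approximant stages, shows that the
restriction to the closure satisfies the same subformulas.

Second, a countable model unravels into a tree: a node is a walk from the satisfying state that
never immediately retraces its last step, and the children of a node are indexed by the codes of
(program, state) pairs. The projection of the unravelling onto the model is a bijection from the
`α`-successors of each node onto the `α`-successors of its image, for every program `α` of the
sentence, and such maps preserve satisfaction.
-/

open OrdinalApprox

theorem cardGT_iff_lt_encard {α : Type*} {s : Set α} {n : ℕ} :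
    CardGT s n ↔ (n : ℕ∞) < s.encard := by
  constructor
  · rintro ⟨t, hts, hn⟩
    calc (n : ℕ∞) < t.card := by exact_mod_cast hn
      _ = (t : Set α).encard := (Set.encard_coe_eq_coe_finsetCard t).symm
      _ ≤ s.encard := Set.encard_le_encard hts
  · intro h
    obtain ⟨t, hts, ht⟩ := Set.exists_subset_encard_eq (Order.add_one_le_of_lt h)
    have hfin : t.Finite := Set.finite_of_encard_eq_coe ht
    refine ⟨hfin.toFinset, by simpa using hts, ?_⟩
    rw [hfin.encard_eq_coe_toFinset_card] at ht
    have : hfin.toFinset.card = n + 1 := by exact_mod_cast ht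
    omega

theorem cardLE_iff_encard_le {α : Type*} {s : Set α} {n : ℕ} :
    CardLE s n ↔ s.encard ≤ n := by
  constructor
  · rintro ⟨t, hst, hn⟩
    calc s.encard ≤ (t : Set α).encard := Set.encard_le_encard hst
      _ = t.card := Set.encard_coe_eq_coe_finsetCard t
      _ ≤ n := by exact_mod_cast hn
  · intro h
    have hfin : s.Finite := Set.finite_of_encard_le_coe h
    refine ⟨hfin.toFinset, by simp, ?_⟩
    rw [hfin.encard_eq_coe_toFinset_card] at h
    exact_mod_cast h

theorem CardGT.mono {α : Type*} {s t : Set α} {n : ℕ} (h : CardGT s n) (hst : s ⊆ t) :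
    CardGT t n :=
  let ⟨u, hus, hn⟩ := h
  ⟨u, hus.trans hst, hn⟩

theorem CardLE.subset {α : Type*} {s t : Set α} {n : ℕ} (h : CardLE t n) (hst : s ⊆ t) :
    CardLE s n :=
  let ⟨u, htu, hn⟩ := h
  ⟨u, hst.trans htu, hn⟩

theorem Set.exists_finite_subset_lt_encard {α : Type*} (S : Set α) (n : ℕ) :
    ∃ T ⊆ S, T.Finite ∧ ((n : ℕ∞) < S.encard → (n : ℕ∞) < T.encard) := by
  by_cases h : (n : ℕ∞) < S.encard
  · obtain ⟨T, hTS, hT⟩ := Set.exists_subset_encard_eq (Order.add_one_le_of_lt h)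
    refine ⟨T, hTS, Set.finite_of_encard_eq_coe hT, fun _ => ?_⟩
    rw [hT]
    exact_mod_cast Nat.lt_succ_self n
  · exact ⟨∅, Set.empty_subset S, Set.finite_empty, fun h' => absurd h' h⟩

theorem lt_encard_iff_of_injOn {W₁ W₂ : Type*} {π : W₁ → W₂} {A : Set W₁} {B : Set W₂} {n : ℕ}
    (hmaps : Set.MapsTo π A B) (hinj : Set.InjOn π A)
    (hcount : (n : ℕ∞) < B.encard → (n : ℕ∞) < (π '' A).encard) :
    (n : ℕ∞) < A.encard ↔ (n : ℕ∞) < B.encard :=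
  ⟨fun h => h.trans_le (Set.encard_le_encard_of_injOn hmaps hinj),
    fun h => hinj.encard_image ▸ hcount h⟩

theorem Set.Countable.setOf_forall_mem_list {α : Type*} {s : Set α} (hs : s.Countable) :
    {l : List α | ∀ x ∈ l, x ∈ s}.Countable := by
  have : Countable s := hs.to_subtype
  refine (Set.countable_range (List.map (Subtype.val : s → α))).mono fun l hl => ?_
  lift l to List s using hl
  exact ⟨l, rfl⟩

theorem Set.exists_countable_closure {α : Type*} {s : Set α} (hs : s.Countable)
    {gen : Set α → Set α} (hmono : Monotone gen) (hgen : ∀ t, t.Countable → (gen t).Countable) :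
    ∃ C, s ⊆ C ∧ C.Countable ∧ ∀ t ⊆ C, t.Finite → gen t ⊆ C := by
  let stage : ℕ → Set α := fun n => (fun t => t ∪ gen t)^[n] s
  have stage_succ (n : ℕ) : stage (n + 1) = stage n ∪ gen (stage n) :=
    Function.iterate_succ_apply' _ n s
  have stage_mono : Monotone stage :=
    monotone_nat_of_le_succ fun n => (stage_succ n).symm ▸ Set.subset_union_left
  refine ⟨⋃ n, stage n, Set.subset_iUnion stage 0, Set.countable_iUnion fun n => ?_,
    fun t ht htfin => ?_⟩
  · induction n with
    | zero => exact hs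
    | succ n ih => exact stage_succ n ▸ ih.union (hgen _ ih)
  · obtain ⟨n, hn⟩ := stage_mono.directed_le.exists_mem_subset_of_finset_subset_biUnion
      (s := htfin.toFinset) (by simpa using ht)
    rw [Set.Finite.coe_toFinset] at hn
    calc gen t ⊆ gen (stage n) := hmono hn
      _ ⊆ stage (n + 1) := stage_succ n ▸ Set.subset_union_right
      _ ⊆ ⋃ n, stage n := Set.subset_iUnion stage (n + 1)

theorem Ordinal.sInf_setOf_lt_and {p : Ordinal → Prop} {l κ : Ordinal} (hp : p l) (hl : l < κ) :
    sInf {l | p l} < κ ∧ p (sInf {l | p l}) :=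
  ⟨(csInf_le' hp).trans_lt hl, csInf_mem (s := {l | p l}) ⟨l, hp⟩⟩

theorem mem_lfpApprox_iff {W : Type*} (f : Set W →o Set W) (κ : Ordinal) (u : W) :
    u ∈ lfpApprox f ⊥ κ ↔ ∃ l < κ, u ∈ f (lfpApprox f ⊥ l) := by
  rw [lfpApprox]
  simp

theorem mem_gfpApprox_iff {W : Type*} (f : Set W →o Set W) (κ : Ordinal) (u : W) :
    u ∈ gfpApprox f ⊤ κ ↔ ∀ l < κ, u ∈ f (gfpApprox f ⊤ l) := by
  rw [gfpApprox]
  simp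

section FixpointPreimage

variable {W₁ W₂ : Type*} (π : W₁ → W₂) (f : Set W₂ →o Set W₂) (g : Set W₁ →o Set W₁)
  {O : Set Ordinal} (hθ : (Order.succ (Cardinal.mk (Set W₂))).ord ∈ O)
include hθ

theorem lfp_eq_preimage_of_approx
    (hcomm : ∀ κ ∈ O, g (π ⁻¹' lfpApprox f ⊥ κ) = π ⁻¹' f (lfpApprox f ⊥ κ))
    (hrank : ∀ x κ, π x ∈ lfpApprox f ⊥ κ → ∃ l ∈ O, l < κ ∧ π x ∈ f (lfpApprox f ⊥ l)) :
    g.lfp = π ⁻¹' f.lfp := by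
  have hθf := lfpApprox_ord_eq_lfp f
  have hθg : g (π ⁻¹' f.lfp) = π ⁻¹' f.lfp := by
    rw [← hθf, hcomm _ hθ, hθf, f.map_lfp]
  have reach : ∀ κ ∈ O, ∀ x, π x ∈ f (lfpApprox f ⊥ κ) → x ∈ g.lfp := by
    intro κ
    induction κ using WellFoundedLT.induction with
    | _ κ ih =>
      intro hκ x hx
      have hsub : π ⁻¹' lfpApprox f ⊥ κ ⊆ g.lfp := fun v hv =>
        let ⟨l, hlO, hlκ, hl⟩ := hrank v κ hv
        ih l hlκ hlO v hl
      rw [← g.map_lfp]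
      exact g.mono hsub (by rwa [hcomm κ hκ])
  refine le_antisymm (g.lfp_le hθg.le) fun x hx => reach _ hθ x ?_
  rwa [hθf, f.map_lfp]

theorem gfp_eq_preimage_of_approx
    (hcomm : ∀ κ ∈ O, g (π ⁻¹' gfpApprox f ⊤ κ) = π ⁻¹' f (gfpApprox f ⊤ κ))
    (hrank : ∀ x, ∀ κ ∈ O, π x ∉ gfpApprox f ⊤ κ → ∃ l ∈ O, l < κ ∧ π x ∉ f (gfpApprox f ⊤ l)) :
    g.gfp = π ⁻¹' f.gfp := by
  have hθf := gfpApprox_ord_eq_gfp f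
  have hθg : g (π ⁻¹' f.gfp) = π ⁻¹' f.gfp := by
    rw [← hθf, hcomm _ hθ, hθf, f.map_gfp]
  have stay : ∀ κ ∈ O, g.gfp ⊆ π ⁻¹' gfpApprox f ⊤ κ := by
    intro κ
    induction κ using WellFoundedLT.induction with
    | _ κ ih =>
      intro hκ x hx
      by_contra hxκ
      obtain ⟨l, hlO, hlκ, hl⟩ := hrank x κ hκ hxκ
      rw [← g.map_gfp] at hx
      have := g.mono (ih l hlκ hlO) hx
      rw [hcomm l hlO] at this
      exact hl this
  refine le_antisymm ?_ (g.le_gfp hθg.ge)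
  rw [← hθf]
  exact stay _ hθ

end FixpointPreimage

def Prg.converse {Pr : Type} : Prg Pr → Prg Pr
  | .atom a => .inv a
  | .inv a => .atom a

@[simp]
theorem Prg.converse_converse {Pr : Type} (α : Prg Pr) : α.converse.converse = α := by
  cases α <;> rfl

namespace Fml

variable {P N V Pr : Type}

def subformulas : Fml P N V Pr → Set (Fml P N V Pr)
  | .or φ ψ => insert (.or φ ψ) (φ.subformulas ∪ ψ.subformulas)
  | .and φ ψ => insert (.and φ ψ) (φ.subformulas ∪ ψ.subformulas)
  | .atleast n α φ => insert (.atleast n α φ) φ.subformulas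
  | .allbut n α φ => insert (.allbut n α φ) φ.subformulas
  | .mu y φ => insert (.mu y φ) φ.subformulas
  | .nu y φ => insert (.nu y φ) φ.subformulas
  | φ => {φ}

theorem mem_subformulas_self (φ : Fml P N V Pr) : φ ∈ φ.subformulas := by
  cases φ <;> simp [subformulas]

theorem finite_subformulas (φ : Fml P N V Pr) : φ.subformulas.Finite := by
  induction φ <;> simp_all [subformulas]

theorem finite_prgs (φ : Fml P N V Pr) : φ.prgs.Finite := by
  induction φ <;> simp_all [prgs]

theorem prgs_subset_of_mem_subformulas {φ χ : Fml P N V Pr} (h : χ ∈ φ.subformulas) :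
    χ.prgs ⊆ φ.prgs := by
  induction φ with
  | or φ ψ ihφ ihψ | and φ ψ ihφ ihψ =>
    rcases h with rfl | h | h
    exacts [subset_rfl, (ihφ h).trans Set.subset_union_left, (ihψ h).trans Set.subset_union_right]
  | atleast n α φ ih | allbut n α φ ih =>
    rcases h with rfl | h
    exacts [subset_rfl, (ih h).trans (Set.subset_insert α _)]
  | mu y φ ih | nu y φ ih =>
    rcases h with rfl | h
    exacts [subset_rfl, ih h]
  | _ => rw [h]

end Fml

def stageChains {P N V Pr : Type} (Γ : Set (Fml P N V Pr)) (O : Set Ordinal) :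
    Set (List (Fml P N V Pr × Ordinal)) :=
  {c | ∀ e ∈ c, e ∈ Γ ×ˢ O}

namespace Kripke

variable {P N V Pr W : Type} (K : Kripke P N Pr W)

theorem sat_mono (φ : Fml P N V Pr) {𝓥 𝓥' : V → Set W} (h : ∀ x, 𝓥 x ⊆ 𝓥' x) :
    K.sat φ 𝓥 ⊆ K.sat φ 𝓥' := by
  induction φ generalizing 𝓥 𝓥' with
  | var x => exact h x
  | or φ ψ ihφ ihψ => exact Set.union_subset_union (ihφ h) (ihψ h)
  | and φ ψ ihφ ihψ => exact Set.inter_subset_inter (ihφ h) (ihψ h)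
  | atleast n α φ ih =>
    exact fun u hu => CardGT.mono hu fun v hv => ⟨hv.1, ih h hv.2⟩
  | allbut n α φ ih =>
    exact fun u hu => CardLE.subset hu fun v hv => ⟨hv.1, fun hc => hv.2 (ih h hc)⟩
  | mu y φ ih =>
    refine fun u hu S hS => hu S (fun v hv => hS (ih (fun z => ?_) hv))
    split_ifs
    exacts [subset_rfl, h z]
  | nu y φ ih =>
    refine fun u ⟨S, hS, huS⟩ => ⟨S, fun v hv => ih (fun z => ?_) (hS hv), huS⟩
    split_ifs
    exacts [subset_rfl, h z]
  | _ => exact subset_rfl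

open Classical in
noncomputable def fixOp (ψ : Fml P N V Pr) (𝓥 : V → Set W) (y : V) : Set W →o Set W where
  toFun S := K.sat ψ fun z => if z = y then S else 𝓥 z
  monotone' S S' h := K.sat_mono ψ fun z => by
    split_ifs
    exacts [h, subset_rfl]

theorem sat_mu_eq_lfp (y : V) (ψ : Fml P N V Pr) (𝓥 : V → Set W) :
    K.sat (.mu y ψ) 𝓥 = (K.fixOp ψ 𝓥 y).lfp :=
  rfl

theorem sat_nu_eq_gfp (y : V) (ψ : Fml P N V Pr) (𝓥 : V → Set W) :
    K.sat (.nu y ψ) 𝓥 = (K.fixOp ψ 𝓥 y).gfp :=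
  rfl

theorem mem_sat_atleast_iff {n : ℕ} {α : Prg Pr} {ψ : Fml P N V Pr} {𝓥 : V → Set W} {w : W} :
    w ∈ K.sat (.atleast n α ψ) 𝓥 ↔ (n : ℕ∞) < {u | K.rel α w u ∧ u ∈ K.sat ψ 𝓥}.encard :=
  cardGT_iff_lt_encard

theorem mem_sat_allbut_iff {n : ℕ} {α : Prg Pr} {ψ : Fml P N V Pr} {𝓥 : V → Set W} {w : W} :
    w ∈ K.sat (.allbut n α ψ) 𝓥 ↔ {u | K.rel α w u ∧ u ∉ K.sat ψ 𝓥}.encard ≤ n :=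
  cardLE_iff_encard_le

@[simp]
theorem rel_converse (α : Prg Pr) (u v : W) : K.rel α.converse u v ↔ K.rel α v u := by
  cases α <;> rfl

/-! ### Pulling back the semantics along a map -/

variable {W₁ W₂ : Type}

open Classical in
/-- A Tarski–Vaught test for `π` relative to the formulas `Γ`, the approximant stages `O` and the
environments `E`. By the stage `(succ #(Set W₂)).ord` every approximant sequence on `Set W₂` has
reached its fixpoint. -/
structure IsTarskiVaught (K₁ : Kripke P N Pr W₁) (K₂ : Kripke P N Pr W₂) (π : W₁ → W₂)
    (Γ : Set (Fml P N V Pr)) (O : Set Ordinal) (E : Set (V → Set W₂)) : Prop where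
  L_eq_preimage : ∀ p, K₁.L p = π ⁻¹' K₂.L p
  rel_map : ∀ α x y, K₁.rel α x y → K₂.rel α (π x) (π y)
  injOn_rel : ∀ α x, Set.InjOn π {y | K₁.rel α x y}
  lt_encard_atleast : ∀ 𝓥 ∈ E, ∀ n α ψ, Fml.atleast n α ψ ∈ Γ → ∀ x,
    (n : ℕ∞) < {v | K₂.rel α (π x) v ∧ v ∈ K₂.sat ψ 𝓥}.encard →
      (n : ℕ∞) < (π '' {y | K₁.rel α x y ∧ π y ∈ K₂.sat ψ 𝓥}).encard
  lt_encard_allbut : ∀ 𝓥 ∈ E, ∀ n α ψ, Fml.allbut n α ψ ∈ Γ → ∀ x,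
    (n : ℕ∞) < {v | K₂.rel α (π x) v ∧ v ∉ K₂.sat ψ 𝓥}.encard →
      (n : ℕ∞) < (π '' {y | K₁.rel α x y ∧ π y ∉ K₂.sat ψ 𝓥}).encard
  ord_mem : (Order.succ (Cardinal.mk (Set W₂))).ord ∈ O
  update_mu_mem : ∀ 𝓥 ∈ E, ∀ y ψ, Fml.mu y ψ ∈ Γ → ∀ κ ∈ O,
    (fun z => if z = y then lfpApprox (K₂.fixOp ψ 𝓥 y) ⊥ κ else 𝓥 z) ∈ E
  update_nu_mem : ∀ 𝓥 ∈ E, ∀ y ψ, Fml.nu y ψ ∈ Γ → ∀ κ ∈ O,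
    (fun z => if z = y then gfpApprox (K₂.fixOp ψ 𝓥 y) ⊤ κ else 𝓥 z) ∈ E
  rank_mu : ∀ 𝓥 ∈ E, ∀ y ψ, Fml.mu y ψ ∈ Γ → ∀ x κ,
    π x ∈ lfpApprox (K₂.fixOp ψ 𝓥 y) ⊥ κ →
      ∃ l ∈ O, l < κ ∧ π x ∈ K₂.fixOp ψ 𝓥 y (lfpApprox (K₂.fixOp ψ 𝓥 y) ⊥ l)
  rank_nu : ∀ 𝓥 ∈ E, ∀ y ψ, Fml.nu y ψ ∈ Γ → ∀ x, ∀ κ ∈ O,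
    π x ∉ gfpApprox (K₂.fixOp ψ 𝓥 y) ⊤ κ →
      ∃ l ∈ O, l < κ ∧ π x ∉ K₂.fixOp ψ 𝓥 y (gfpApprox (K₂.fixOp ψ 𝓥 y) ⊤ l)

open Classical in
theorem fixOp_preimage (K₁ : Kripke P N Pr W₁) (K₂ : Kripke P N Pr W₂) (π : W₁ → W₂)
    (ψ : Fml P N V Pr) (𝓥 : V → Set W₂) (y : V) (S : Set W₂)
    (h : K₁.sat ψ (fun z => π ⁻¹' if z = y then S else 𝓥 z) =
      π ⁻¹' K₂.sat ψ fun z => if z = y then S else 𝓥 z) :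
    K₁.fixOp ψ (fun z => π ⁻¹' 𝓥 z) y (π ⁻¹' S) = π ⁻¹' K₂.fixOp ψ 𝓥 y S := by
  show K₁.sat ψ _ = π ⁻¹' K₂.sat ψ _
  rw [← h]
  congr 1
  funext z
  split_ifs <;> rfl

theorem IsTarskiVaught.sat_preimage {K₁ : Kripke P N Pr W₁} {K₂ : Kripke P N Pr W₂}
    {π : W₁ → W₂} {Γ : Set (Fml P N V Pr)} {O : Set Ordinal} {E : Set (V → Set W₂)}
    (h : K₁.IsTarskiVaught K₂ π Γ O E) (χ : Fml P N V Pr) (hnn : χ.NoNom)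
    (hΓ : χ.subformulas ⊆ Γ) (𝓥 : V → Set W₂) (h𝓥 : 𝓥 ∈ E) :
    K₁.sat χ (fun z => π ⁻¹' 𝓥 z) = π ⁻¹' K₂.sat χ 𝓥 := by
  have hχ : χ ∈ Γ := hΓ χ.mem_subformulas_self
  induction χ generalizing 𝓥 with
  | tt | ff | var => rfl
  | prop p => exact h.L_eq_preimage p
  | nprop p => exact congrArg compl (h.L_eq_preimage p)
  | nom | nnom => exact hnn.elim
  | or a b iha ihb | and a b iha ihb =>
    have ha := iha hnn.1 (fun _ hc => hΓ (.inr (.inl hc))) 𝓥 h𝓥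
      (hΓ (.inr (.inl a.mem_subformulas_self)))
    have hb := ihb hnn.2 (fun _ hc => hΓ (.inr (.inr hc))) 𝓥 h𝓥
      (hΓ (.inr (.inr b.mem_subformulas_self)))
    simp only [sat, ha, hb, Set.preimage_union, Set.preimage_inter]
  | atleast n α ψ ih =>
    have hψ := ih hnn (fun _ hc => hΓ (.inr hc)) 𝓥 h𝓥 (hΓ (.inr ψ.mem_subformulas_self))
    ext x
    rw [mem_sat_atleast_iff, Set.mem_preimage, mem_sat_atleast_iff, hψ]
    exact lt_encard_iff_of_injOn (fun y hy => ⟨h.rel_map α x y hy.1, hy.2⟩)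
      ((h.injOn_rel α x).mono fun _ hy => hy.1) (h.lt_encard_atleast 𝓥 h𝓥 n α ψ hχ x)
  | allbut n α ψ ih =>
    have hψ := ih hnn (fun _ hc => hΓ (.inr hc)) 𝓥 h𝓥 (hΓ (.inr ψ.mem_subformulas_self))
    ext x
    rw [mem_sat_allbut_iff, Set.mem_preimage, mem_sat_allbut_iff, hψ, ← not_lt, ← not_lt]
    exact not_congr <| lt_encard_iff_of_injOn (fun y hy => ⟨h.rel_map α x y hy.1, hy.2⟩)
      ((h.injOn_rel α x).mono fun _ hy => hy.1) (h.lt_encard_allbut 𝓥 h𝓥 n α ψ hχ x)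
  | mu y ψ ih =>
    rw [sat_mu_eq_lfp, sat_mu_eq_lfp]
    refine lfp_eq_preimage_of_approx π _ _ h.ord_mem (fun κ hκ => ?_) (h.rank_mu 𝓥 h𝓥 y ψ hχ)
    refine fixOp_preimage K₁ K₂ π ψ 𝓥 y _ (ih hnn (fun _ hc => hΓ (.inr hc)) _
      (h.update_mu_mem 𝓥 h𝓥 y ψ hχ κ hκ) (hΓ (.inr ψ.mem_subformulas_self)))
  | nu y ψ ih =>
    rw [sat_nu_eq_gfp, sat_nu_eq_gfp]
    refine gfp_eq_preimage_of_approx π _ _ h.ord_mem (fun κ hκ => ?_) (h.rank_nu 𝓥 h𝓥 y ψ hχ)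
    refine fixOp_preimage K₁ K₂ π ψ 𝓥 y _ (ih hnn (fun _ hc => hΓ (.inr hc)) _
      (h.update_nu_mem 𝓥 h𝓥 y ψ hχ κ hκ) (hΓ (.inr ψ.mem_subformulas_self)))

theorem sat_preimage_of_surjOn (K₁ : Kripke P N Pr W₁) (K₂ : Kripke P N Pr W₂) (π : W₁ → W₂)
    (φ : Fml P N V Pr) (hnn : φ.NoNom) (hL : ∀ p, K₁.L p = π ⁻¹' K₂.L p)
    (hmap : ∀ α x y, K₁.rel α x y → K₂.rel α (π x) (π y))
    (hinj : ∀ α x, Set.InjOn π {y | K₁.rel α x y})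
    (hsurj : ∀ α ∈ φ.prgs, ∀ x, Set.SurjOn π {y | K₁.rel α x y} {v | K₂.rel α (π x) v})
    (𝓥 : V → Set W₂) :
    K₁.sat φ (fun z => π ⁻¹' 𝓥 z) = π ⁻¹' K₂.sat φ 𝓥 := by
  have count : ∀ α ∈ φ.prgs, ∀ x (T : Set W₂) (n : ℕ),
      (n : ℕ∞) < {v | K₂.rel α (π x) v ∧ v ∈ T}.encard →
        (n : ℕ∞) < (π '' {y | K₁.rel α x y ∧ π y ∈ T}).encard := by
    refine fun α hα x T n hn => hn.trans_le (Set.encard_le_encard fun v ⟨hv, hvT⟩ => ?_)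
    obtain ⟨y, hy, rfl⟩ := hsurj α hα x hv
    exact ⟨y, ⟨hy, hvT⟩, rfl⟩
  have hprgs : ∀ χ ∈ φ.subformulas, χ.prgs ⊆ φ.prgs := fun _ => Fml.prgs_subset_of_mem_subformulas
  refine IsTarskiVaught.sat_preimage (Γ := φ.subformulas) (O := Set.univ) (E := Set.univ)
    { L_eq_preimage := hL
      rel_map := hmap
      injOn_rel := hinj
      lt_encard_atleast := fun 𝓥 _ n α ψ hχ x =>
        count α (hprgs _ hχ (Set.mem_insert α _)) x (K₂.sat ψ 𝓥) n
      lt_encard_allbut := fun 𝓥 _ n α ψ hχ x =>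
        count α (hprgs _ hχ (Set.mem_insert α _)) x (K₂.sat ψ 𝓥)ᶜ n
      ord_mem := trivial
      update_mu_mem := fun _ _ _ _ _ _ _ => trivial
      update_nu_mem := fun _ _ _ _ _ _ _ => trivial
      rank_mu := fun _ _ _ _ _ x κ hx => ?_
      rank_nu := fun _ _ _ _ _ x κ _ hx => ?_ } φ hnn subset_rfl 𝓥 trivial
  · obtain ⟨l, hl, hxl⟩ := (mem_lfpApprox_iff _ κ _).mp hx
    exact ⟨l, trivial, hl, hxl⟩
  · obtain ⟨l, hl, hxl⟩ := not_forall₂.mp ((mem_gfpApprox_iff _ κ _).not.mp hx)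
    exact ⟨l, trivial, hl, hxl⟩

/-! ### Countable models -/

noncomputable def restrict (X : Set W) (hX : X.Nonempty) : Kripke P N Pr X where
  ne := hX.to_subtype
  R a x y := K.R a x y
  L p := Subtype.val ⁻¹' K.L p
  nomVal _ := ⟨hX.some, hX.some_mem⟩

theorem restrict_rel {X : Set W} (hX : X.Nonempty) (α : Prg Pr) (x y : X) :
    (K.restrict X hX).rel α x y ↔ K.rel α x y := by
  cases α <;> rfl

theorem lt_encard_image_restrict {X : Set W} (hX : X.Nonempty) {α : Prg Pr} {x : X}
    {S T : Set W} {n : ℕ} (hTS : T ⊆ {v | K.rel α x v ∧ v ∈ S}) (hTX : T ⊆ X)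
    (hn : (n : ℕ∞) < T.encard) :
    (n : ℕ∞) < (Subtype.val '' {y : X | (K.restrict X hX).rel α x y ∧ y.1 ∈ S}).encard :=
  hn.trans_le <| Set.encard_le_encard fun v hv =>
    ⟨⟨v, hTX hv⟩, ⟨(K.restrict_rel hX α _ _).mpr (hTS hv).1, (hTS hv).2⟩, rfl⟩

open Classical in
/-- Environments binding fixpoint variables to approximant stages; there are countably many of
them when the stages range over a countable set. -/
noncomputable def stageEnv : List (Fml P N V Pr × Ordinal) → V → Set W
  | [] => fun _ => ∅
  | (.mu y ψ, κ) :: c => fun z =>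
    if z = y then lfpApprox (K.fixOp ψ (stageEnv c) y) ⊥ κ else stageEnv c z
  | (.nu y ψ, κ) :: c => fun z =>
    if z = y then gfpApprox (K.fixOp ψ (stageEnv c) y) ⊤ κ else stageEnv c z
  | _ :: c => stageEnv c

noncomputable def skolemWitnesses (𝓥 : V → Set W) (u : W) : Fml P N V Pr → Set (W ⊕ Ordinal)
  | .atleast n α ψ => Sum.inl ''
      (Set.exists_finite_subset_lt_encard {v | K.rel α u v ∧ v ∈ K.sat ψ 𝓥} n).choose
  | .allbut n α ψ => Sum.inl ''
      (Set.exists_finite_subset_lt_encard {v | K.rel α u v ∧ v ∉ K.sat ψ 𝓥} n).choose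
  | .mu y ψ => {.inr (sInf {l | u ∈ K.fixOp ψ 𝓥 y (lfpApprox (K.fixOp ψ 𝓥 y) ⊥ l)})}
  | .nu y ψ => {.inr (sInf {l | u ∉ K.fixOp ψ 𝓥 y (gfpApprox (K.fixOp ψ 𝓥 y) ⊤ l)})}
  | _ => ∅

theorem countable_skolemWitnesses (𝓥 : V → Set W) (u : W) (χ : Fml P N V Pr) :
    (K.skolemWitnesses 𝓥 u χ).Countable := by
  cases χ with
  | atleast | allbut =>
    exact ((Set.exists_finite_subset_lt_encard _ _).choose_spec.2.1.image _).countable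
  | mu | nu => exact Set.countable_singleton _
  | _ => exact Set.countable_empty

/-- States and stages are closed up together, since witnesses of either kind depend on both. -/
theorem exists_countable_skolemHull {Γ : Set (Fml P N V Pr)} (hΓ : Γ.Countable) (w : W) :
    ∃ C : Set (W ⊕ Ordinal), .inl w ∈ C ∧ .inr (Order.succ (Cardinal.mk (Set W))).ord ∈ C ∧
      C.Countable ∧ ∀ c ∈ stageChains Γ (Sum.inr ⁻¹' C), ∀ u, .inl u ∈ C → ∀ χ ∈ Γ,
        K.skolemWitnesses (K.stageEnv c) u χ ⊆ C := by
  obtain ⟨C, hsC, hC, hclosed⟩ := Set.exists_countable_closure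
    (s := {.inl w, .inr (Order.succ (Cardinal.mk (Set W))).ord}) (Set.toFinite _).countable
    (gen := fun t => ⋃ c ∈ stageChains Γ (Sum.inr ⁻¹' t), ⋃ u ∈ Sum.inl ⁻¹' t, ⋃ χ ∈ Γ,
      K.skolemWitnesses (K.stageEnv c) u χ)
    (fun t t' htt' => Set.biUnion_mono (fun c hc e he => ⟨(hc e he).1, htt' (hc e he).2⟩)
      fun c _ => Set.biUnion_mono (fun _ hu => htt' hu) fun _ _ => subset_rfl)
    (fun t ht => (hΓ.prod (ht.preimage Sum.inr_injective)).setOf_forall_mem_list.biUnion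
      fun c _ => (ht.preimage Sum.inl_injective).biUnion fun u _ =>
        hΓ.biUnion fun χ _ => K.countable_skolemWitnesses _ u χ)
  refine ⟨C, hsC (.inl rfl), hsC (.inr rfl), hC, fun c hc u hu χ hχ => ?_⟩
  let t : Set (W ⊕ Ordinal) := insert (.inl u) {a | a ∈ c.map (Sum.inr ∘ Prod.snd)}
  have htC : t ⊆ C := by
    rintro a (rfl | ha)
    · exact hu
    · obtain ⟨e, he, rfl⟩ := List.mem_map.mp ha
      exact (hc e he).2
  have hct : c ∈ stageChains Γ (Sum.inr ⁻¹' t) := fun e he =>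
    ⟨(hc e he).1, Or.inr (List.mem_map_of_mem (f := Sum.inr ∘ Prod.snd) he)⟩
  refine fun a ha => hclosed t htC ((List.finite_toSet _).insert _) ?_
  exact Set.mem_iUnion₂.mpr ⟨c, hct, Set.mem_iUnion₂.mpr ⟨u, Or.inl rfl,
    Set.mem_iUnion₂.mpr ⟨χ, hχ, ha⟩⟩⟩

theorem isTarskiVaught_restrict {Γ : Set (Fml P N V Pr)} {C : Set (W ⊕ Ordinal)}
    (hX : (Sum.inl ⁻¹' C).Nonempty) (hθ : .inr (Order.succ (Cardinal.mk (Set W))).ord ∈ C)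
    (hclosed : ∀ c ∈ stageChains Γ (Sum.inr ⁻¹' C), ∀ u, .inl u ∈ C → ∀ χ ∈ Γ,
      K.skolemWitnesses (K.stageEnv c) u χ ⊆ C) :
    (K.restrict _ hX).IsTarskiVaught K Subtype.val Γ (Sum.inr ⁻¹' C)
      (K.stageEnv '' stageChains Γ (Sum.inr ⁻¹' C)) where
  L_eq_preimage _ := rfl
  rel_map α x y := (K.restrict_rel hX α x y).mp
  injOn_rel _ _ := Subtype.val_injective.injOn
  lt_encard_atleast := by
    rintro _ ⟨c, hc, rfl⟩ n α ψ hχ x hn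
    obtain ⟨hTS, -, hT⟩ := (Set.exists_finite_subset_lt_encard
      {v | K.rel α x v ∧ v ∈ K.sat ψ (K.stageEnv c)} n).choose_spec
    exact K.lt_encard_image_restrict hX hTS (fun v hv => hclosed c hc x x.2 _ hχ ⟨v, hv, rfl⟩)
      (hT hn)
  lt_encard_allbut := by
    rintro _ ⟨c, hc, rfl⟩ n α ψ hχ x hn
    obtain ⟨hTS, -, hT⟩ := (Set.exists_finite_subset_lt_encard
      {v | K.rel α x v ∧ v ∉ K.sat ψ (K.stageEnv c)} n).choose_spec
    exact K.lt_encard_image_restrict hX hTS (fun v hv => hclosed c hc x x.2 _ hχ ⟨v, hv, rfl⟩)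
      (hT hn)
  ord_mem := hθ
  update_mu_mem := by
    rintro _ ⟨c, hc, rfl⟩ y ψ hχ κ hκ
    exact ⟨(.mu y ψ, κ) :: c, List.forall_mem_cons.mpr ⟨⟨hχ, hκ⟩, hc⟩, rfl⟩
  update_nu_mem := by
    rintro _ ⟨c, hc, rfl⟩ y ψ hχ κ hκ
    exact ⟨(.nu y ψ, κ) :: c, List.forall_mem_cons.mpr ⟨⟨hχ, hκ⟩, hc⟩, rfl⟩
  rank_mu := by
    rintro _ ⟨c, hc, rfl⟩ y ψ hχ x κ hx
    obtain ⟨l, hl, hxl⟩ := (mem_lfpApprox_iff _ κ _).mp hx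
    exact ⟨_, hclosed c hc x x.2 _ hχ rfl, Ordinal.sInf_setOf_lt_and hxl hl⟩
  rank_nu := by
    rintro _ ⟨c, hc, rfl⟩ y ψ hχ x κ - hx
    obtain ⟨l, hl, hxl⟩ := not_forall₂.mp ((mem_gfpApprox_iff _ κ _).not.mp hx)
    exact ⟨_, hclosed c hc x x.2 _ hχ rfl, Ordinal.sInf_setOf_lt_and hxl hl⟩

end Kripke

theorem exists_countable_model {P N V Pr : Type} (φ : Fml P N V Pr) (hnn : φ.NoNom)
    (hsat : Satisfiable φ) :
    ∃ (W : Type) (_ : Countable W) (K : Kripke P N Pr W) (w : W), Models K w φ := by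
  obtain ⟨W, K, w, hw⟩ := hsat
  obtain ⟨C, hwC, hθC, hC, hclosed⟩ :=
    K.exists_countable_skolemHull φ.finite_subformulas.countable w
  have hX : (Sum.inl ⁻¹' C).Nonempty := ⟨w, hwC⟩
  have hsat := (K.isTarskiVaught_restrict hX hθC hclosed).sat_preimage φ hnn subset_rfl _
    ⟨[], by simp [stageChains], rfl⟩
  refine ⟨_, (hC.preimage Sum.inl_injective).to_subtype, K.restrict _ hX, ⟨w, hwC⟩, ?_⟩
  show _ ∈ (K.restrict _ hX).sat φ fun z => Subtype.val ⁻¹' K.stageEnv [] z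
  rw [hsat]
  exact hw

/-! ### Unravelling into a tree -/

def IsLabelledChild {Pr W : Type} (dec : ℕ → Option (Prg Pr × W)) (α : Prg Pr) (x y : Node) :
    Prop :=
  ∃ c v, y = x ++ [c] ∧ dec c = some (α, v)

namespace Kripke

variable {P N Pr W : Type} (K : Kripke P N Pr W) (w : W) (dec : ℕ → Option (Prg Pr × W))

open Classical in
/-- The state of a walk is its current state `u` together with the step `back` returning to the
previous state; forbidding `back` as the next step makes `unravelMap` injective on successors. -/
noncomputable def unravelStep :
    Option (W × Option (Prg Pr × W)) → ℕ → Option (W × Option (Prg Pr × W))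
  | some (u, back), c =>
    match dec c with
    | some (α, v) =>
      if K.rel α u v ∧ back ≠ some (α, v) then some (v, some (α.converse, u)) else none
    | none => none
  | none, _ => none

noncomputable def unravelWalk : Node → Option (W × Option (Prg Pr × W))
  | 0 :: r => r.foldl (K.unravelStep dec) (some (w, none))
  | _ => none

def unravelNodes : Set Node := {x | (K.unravelWalk w dec x).isSome}

noncomputable def unravelMap (x : K.unravelNodes w dec) : W :=
  ((K.unravelWalk w dec x).get x.2).1

noncomputable def unravelBack (x : K.unravelNodes w dec) : Option (Prg Pr × W) :=
  ((K.unravelWalk w dec x).get x.2).2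

def unravelRoot : K.unravelNodes w dec := ⟨[0], rfl⟩

noncomputable def unravel : Kripke P N Pr (K.unravelNodes w dec) where
  ne := ⟨K.unravelRoot w dec⟩
  R a x y := IsLabelledChild dec (.atom a) x y ∨ IsLabelledChild dec (.inv a) y x
  L p := {x | K.unravelMap w dec x ∈ K.L p}
  nomVal _ := K.unravelRoot w dec

variable {K w dec}

theorem unravel_rel {α : Prg Pr} {x y : K.unravelNodes w dec} :
    (K.unravel w dec).rel α x y ↔
      IsLabelledChild dec α x y ∨ IsLabelledChild dec α.converse y x := by
  cases α
  · rfl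
  · exact or_comm

theorem unravelWalk_eq (x : K.unravelNodes w dec) :
    K.unravelWalk w dec x = some (K.unravelMap w dec x, K.unravelBack w dec x) :=
  (Option.some_get x.2).symm

theorem ne_nil_of_mem_unravelNodes {x : Node} (hx : x ∈ K.unravelNodes w dec) : x ≠ [] := by
  rintro rfl
  exact Bool.false_ne_true hx

theorem unravelWalk_snoc {x : Node} (hx : x ≠ []) (c : ℕ) :
    K.unravelWalk w dec (x ++ [c]) = K.unravelStep dec (K.unravelWalk w dec x) c := by
  obtain _ | ⟨_ | a, r⟩ := x
  · exact absurd rfl hx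
  · simp [unravelWalk, List.foldl_append]
  · rfl

theorem unravelStep_eq_some {o : Option (W × Option (Prg Pr × W))} {c : ℕ} {v : W}
    {b : Option (Prg Pr × W)} :
    K.unravelStep dec o c = some (v, b) ↔ ∃ u back α, o = some (u, back) ∧
      dec c = some (α, v) ∧ K.rel α u v ∧ back ≠ some (α, v) ∧ b = some (α.converse, u) := by
  rcases o with _ | ⟨u, back⟩
  · simp [unravelStep]
  rcases hc : dec c with _ | ⟨α, v'⟩
  · simp [unravelStep, hc]
  simp only [unravelStep, hc]
  split_ifs with h <;> aesop

theorem unravel_child {x y : K.unravelNodes w dec} {c : ℕ} (hxy : y.1 = x.1 ++ [c]) :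
    ∃ α, dec c = some (α, K.unravelMap w dec y) ∧
      K.rel α (K.unravelMap w dec x) (K.unravelMap w dec y) ∧
      K.unravelBack w dec x ≠ some (α, K.unravelMap w dec y) ∧
      K.unravelBack w dec y = some (α.converse, K.unravelMap w dec x) := by
  have hy := unravelWalk_eq y
  rw [hxy, unravelWalk_snoc (ne_nil_of_mem_unravelNodes x.2), unravelWalk_eq x,
    unravelStep_eq_some] at hy
  obtain ⟨u, back, α, hx, hdec, hrel, hback, hb⟩ := hy
  obtain ⟨rfl, rfl⟩ := Prod.mk.inj (Option.some.inj hx)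
  exact ⟨α, hdec, hrel, hback, hb⟩

theorem mem_unravelNodes_of_snoc_mem {x : Node} {c : ℕ} (h : x ++ [c] ∈ K.unravelNodes w dec)
    (hx : x ≠ []) : x ∈ K.unravelNodes w dec := by
  change (K.unravelWalk w dec (x ++ [c])).isSome at h
  rw [unravelWalk_snoc hx] at h
  cases hw : K.unravelWalk w dec x
  · simp [hw, unravelStep] at h
  · simp [unravelNodes, hw]

theorem unravel_labelledChild {α : Prg Pr} {x y : K.unravelNodes w dec}
    (h : IsLabelledChild dec α x y) :
    K.rel α (K.unravelMap w dec x) (K.unravelMap w dec y) ∧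
      K.unravelBack w dec x ≠ some (α, K.unravelMap w dec y) ∧
      K.unravelBack w dec y = some (α.converse, K.unravelMap w dec x) ∧
      ∃ c, y.1 = x.1 ++ [c] ∧ dec c = some (α, K.unravelMap w dec y) := by
  obtain ⟨c, v, hc, hdec⟩ := h
  obtain ⟨β, hdec', hrel, hback, hback'⟩ := unravel_child hc
  obtain ⟨rfl, rfl⟩ := Prod.mk.inj (Option.some.inj (hdec.symm.trans hdec'))
  exact ⟨hrel, hback, hback', c, hc, hdec⟩

theorem exists_parent_of_unravelBack_eq {x : K.unravelNodes w dec} {α : Prg Pr} {v : W}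
    (h : K.unravelBack w dec x = some (α, v)) :
    ∃ p : K.unravelNodes w dec, IsLabelledChild dec α.converse p x ∧ K.unravelMap w dec p = v := by
  obtain ⟨L, b, hx⟩ := (List.eq_nil_or_concat' x.1).resolve_left (ne_nil_of_mem_unravelNodes x.2)
  have hxw := unravelWalk_eq x
  rw [h, hx] at hxw
  rcases eq_or_ne L [] with rfl | hL
  · rcases b with _ | b <;> simp [unravelWalk] at hxw
  · let p : K.unravelNodes w dec := ⟨L, mem_unravelNodes_of_snoc_mem (hx ▸ x.2) hL⟩
    obtain ⟨β, hdec, -, -, hback⟩ := unravel_child (x := p) hx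
    obtain ⟨rfl, rfl⟩ := Prod.mk.inj (Option.some.inj (h.symm.trans hback))
    exact ⟨p, ⟨b, _, hx, by rwa [Prg.converse_converse]⟩, rfl⟩

theorem isTree_unravelNodes : IsTree (K.unravelNodes w dec) := by
  refine ⟨⟨fun x hx => ne_nil_of_mem_unravelNodes hx, ?_⟩, ⟨[0], rfl⟩, 0, ?_⟩
  · rintro x y hy ⟨c, rfl⟩ hx
    exact mem_unravelNodes_of_snoc_mem hy hx
  · rintro (_ | ⟨_ | a, r⟩) hx
    · exact absurd rfl (ne_nil_of_mem_unravelNodes hx)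
    · rfl
    · exact absurd hx Bool.false_ne_true

theorem unravel_adj_iff (x y : K.unravelNodes w dec) :
    (∃ α, (K.unravel w dec).rel α x y) ↔ IsChild x.1 y.1 ∨ IsChild y.1 x.1 := by
  constructor
  · rintro ⟨α, h⟩
    rcases unravel_rel.mp h with ⟨c, -, hc, -⟩ | ⟨c, -, hc, -⟩
    exacts [.inl ⟨c, hc⟩, .inr ⟨c, hc⟩]
  · rintro (⟨c, hc⟩ | ⟨c, hc⟩)
    · obtain ⟨α, hdec, -⟩ := unravel_child hc
      exact ⟨α, unravel_rel.mpr (.inl ⟨c, _, hc, hdec⟩)⟩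
    · obtain ⟨α, hdec, -⟩ := unravel_child hc
      exact ⟨α.converse, unravel_rel.mpr (.inr ⟨c, _, hc, by rwa [Prg.converse_converse]⟩)⟩

theorem unravel_rel_map {α : Prg Pr} {x y : K.unravelNodes w dec}
    (h : (K.unravel w dec).rel α x y) :
    K.rel α (K.unravelMap w dec x) (K.unravelMap w dec y) := by
  rcases unravel_rel.mp h with h | h
  · exact (unravel_labelledChild h).1
  · exact (K.rel_converse α _ _).mp (unravel_labelledChild h).1

theorem injOn_unravelMap (hdec : ∀ c₁ c₂ p, dec c₁ = some p → dec c₂ = some p → c₁ = c₂)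
    (α : Prg Pr) (x : K.unravelNodes w dec) :
    Set.InjOn (K.unravelMap w dec) {y | (K.unravel w dec).rel α x y} := by
  intro y₁ h₁ y₂ h₂ heq
  rcases unravel_rel.mp h₁ with h₁ | h₁ <;> rcases unravel_rel.mp h₂ with h₂ | h₂
  · obtain ⟨-, -, -, c₁, hc₁, hd₁⟩ := unravel_labelledChild h₁
    obtain ⟨-, -, -, c₂, hc₂, hd₂⟩ := unravel_labelledChild h₂
    rw [heq] at hd₁
    obtain rfl := hdec c₁ c₂ _ hd₁ hd₂
    exact Subtype.ext (hc₁.trans hc₂.symm)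
  · have := (unravel_labelledChild h₂).2.2.1
    rw [Prg.converse_converse, ← heq] at this
    exact absurd this (unravel_labelledChild h₁).2.1
  · have := (unravel_labelledChild h₁).2.2.1
    rw [Prg.converse_converse, heq] at this
    exact absurd this (unravel_labelledChild h₂).2.1
  · obtain ⟨c₁, -, hc₁, -⟩ := h₁
    obtain ⟨c₂, -, hc₂, -⟩ := h₂
    exact Subtype.ext (List.append_inj_left' (hc₁.symm.trans hc₂) rfl)

theorem surjOn_unravelMap {α : Prg Pr} (hcover : ∀ v, ∃ c, dec c = some (α, v))
    (x : K.unravelNodes w dec) :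
    Set.SurjOn (K.unravelMap w dec) {y | (K.unravel w dec).rel α x y}
      {v | K.rel α (K.unravelMap w dec x) v} := by
  intro v hv
  by_cases hback : K.unravelBack w dec x = some (α, v)
  · obtain ⟨p, hp, rfl⟩ := exists_parent_of_unravelBack_eq hback
    exact ⟨p, unravel_rel.mpr (.inr hp), rfl⟩
  · obtain ⟨c, hc⟩ := hcover v
    have hwalk : K.unravelWalk w dec (x.1 ++ [c]) =
        some (v, some (α.converse, K.unravelMap w dec x)) := by
      rw [unravelWalk_snoc (ne_nil_of_mem_unravelNodes x.2), unravelWalk_eq x, unravelStep_eq_some]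
      exact ⟨_, _, α, rfl, hc, hv, hback, rfl⟩
    refine ⟨⟨x.1 ++ [c], by simp [unravelNodes, hwalk]⟩, unravel_rel.mpr (.inl ⟨c, v, rfl, hc⟩), ?_⟩
    simp [unravelMap, hwalk]

end Kripke

theorem exists_decoding {Pr W : Type} [Countable W] {R : Set (Prg Pr)} (hR : R.Countable) :
    ∃ dec : ℕ → Option (Prg Pr × W), (∀ c₁ c₂ p, dec c₁ = some p → dec c₂ = some p → c₁ = c₂) ∧
      ∀ α ∈ R, ∀ v, ∃ c, dec c = some (α, v) := by
  have : Countable R := hR.to_subtype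
  obtain ⟨e, he⟩ := exists_injective_nat (R × W)
  refine ⟨fun c => (Function.partialInv e c).map fun q => (q.1.1, q.2), ?_, fun α hα v =>
    ⟨e (⟨α, hα⟩, v), by simp [he.isPartialInv _ _ |>.mpr rfl]⟩⟩
  intro c₁ c₂ p h₁ h₂
  obtain ⟨q₁, hq₁, rfl⟩ := Option.map_eq_some_iff.mp h₁
  obtain ⟨q₂, hq₂, hq⟩ := Option.map_eq_some_iff.mp h₂
  obtain ⟨h₁₂, h₂₂⟩ := Prod.mk.inj hq
  rw [← (he.isPartialInv _ _).mp hq₁, ← (he.isPartialInv _ _).mp hq₂,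
    Prod.ext (Subtype.ext h₁₂) h₂₂]

theorem exists_tree_model_of_countable {P N V Pr W : Type} [Countable W] (K : Kripke P N Pr W)
    (w : W) (φ : Fml P N V Pr) (hnn : φ.NoNom) (hw : Models K w φ) :
    ∃ (T : Set Node) (K' : Kripke P N Pr {x : Node // x ∈ T}) (c₀ : {x : Node // x ∈ T}),
      IsTreeStructure T K' ∧ IsRootNode c₀.val ∧ Models K' c₀ φ := by
  obtain ⟨dec, hdec, hcover⟩ := exists_decoding (W := W) φ.finite_prgs.countable
  refine ⟨_, K.unravel w dec, K.unravelRoot w dec,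
    ⟨Kripke.isTree_unravelNodes, Kripke.unravel_adj_iff⟩, rfl, ?_⟩
  have hsat := Kripke.sat_preimage_of_surjOn (K.unravel w dec) K (K.unravelMap w dec) φ hnn
    (fun _ => rfl) (fun _ _ _ => Kripke.unravel_rel_map) (Kripke.injOn_unravelMap hdec)
    (fun α hα => Kripke.surjOn_unravelMap (hcover α hα)) fun _ => ∅
  show _ ∈ (K.unravel w dec).sat φ fun z => K.unravelMap w dec ⁻¹' ∅
  rw [hsat]
  exact hw

theorem full_graded_mu_calculus_tree_model_property_general
    {P N V Pr : Type} (φ : Fml P N V Pr)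
    (hfrag : φ.NoNom) (hsat : Satisfiable φ) :
    ∃ (T : Set Node) (K : Kripke P N Pr {x : Node // x ∈ T}) (c₀ : {x : Node // x ∈ T}),
      IsTreeStructure T K ∧ IsRootNode c₀.val ∧ Models K c₀ φ := by
  obtain ⟨W, _, K, w, hw⟩ := exists_countable_model φ hfrag hsat
  exact exists_tree_model_of_countable K w φ hfrag hw

/-- **Theorem 1 (tree model property).** If a sentence of the full graded μ-calculus
(no nominals) is satisfiable, then it has a tree model: a tree structure whose root
satisfies the sentence. -/
theorem full_graded_mu_calculus_tree_model_property
    {P N V Pr : Type} (φ : Fml P N V Pr)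
    (hsen : φ.IsSentence) (hfrag : φ.NoNom) (hsat : Satisfiable φ) :
    ∃ (T : Set Node) (K : Kripke P N Pr {x : Node // x ∈ T}) (c₀ : {x : Node // x ∈ T}),
      IsTreeStructure T K ∧ IsRootNode c₀.val ∧ Models K c₀ φ :=
  full_graded_mu_calculus_tree_model_property_general φ hfrag hsat
end

section
/- Given a ForAll GNPT A₁ with n₁ states and index k₁, and a Safety GNPT A₂ with n₂ states and counting bound b₂, both over the same alphabet Σ, there exists a GNPT A with n₁·n₂ states, index k₁, and counting bound b₂ such that L(A) = L(A₁) ∩ L(A₂). -/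
/-! ### Fully enriched automata and two-way graded alternating parity tree automata -/

/-- Positive Boolean formulas over atoms of type `X`. -/
inductive PosBool (X : Type) where
  | tru
  | fls
  | atom (x : X)
  | and (f g : PosBool X)
  | or (f g : PosBool X)

namespace PosBool

variable {X : Type}

/-- A set of atoms satisfies a positive Boolean formula. -/
def sats (S : Set X) : PosBool X → Prop
  | .tru => True
  | .fls => False
  | .atom x => x ∈ S
  | .and f g => f.sats S ∧ g.sats S
  | .or f g => f.sats S ∨ g.sats S

/-- All atoms occurring in a positive Boolean formula satisfy `p`. -/
def All (p : X → Prop) : PosBool X → Prop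
  | .tru => True
  | .fls => True
  | .atom x => p x
  | .and f g => f.All p ∧ g.All p
  | .or f g => f.All p ∧ g.All p

end PosBool

/-- Moves of a fully enriched automaton: `⟨n⟩`, `[n]`, `−1`, `ε`, `⟨root⟩`, `[root]`. -/
inductive Mv where
  | dia (n : ℕ)
  | box (n : ℕ)
  | up
  | stay
  | someRoot
  | allRoots

/-- The counting parameter of a move is bounded by `b`. -/
def Mv.Bounded (b : ℕ) : Mv → Prop
  | .dia n => n ≤ b
  | .box n => n ≤ b
  | _ => True

/-- Two-way moves (no jumps to roots): the moves in `D_b⁻`. -/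
def Mv.TwoWay : Mv → Prop
  | .someRoot => False
  | .allRoots => False
  | _ => True

/-- A fully enriched automaton (FEA) over the alphabet `A` with state type `Q`:
counting bound `b > 0`, transition function `δ : Q × A → B⁺(D_b × Q)`, initial state,
and a parity condition `F₁ ⊆ … ⊆ F_k = Q` of index `k`. -/
structure FEA (A Q : Type) where
  finQ : Finite Q
  b : ℕ
  hb : 0 < b
  δ : Q → A → PosBool (Mv × Q)
  hδ : ∀ q a, (δ q a).All (fun m => m.1.Bounded b)
  init : Q
  k : ℕ
  hk : 0 < k
  F : Fin k → Set Q
  Fmono : Monotone F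
  Flast : ∀ (q : Q) (h : k - 1 < k), q ∈ F ⟨k - 1, h⟩

/-- The roots of a forest. -/
def rootsOf (F : Set Node) : Set Node := {x ∈ F | x.length = 1}

/-- Executing a single atom `(d, s)` of a transition at the run node `y`
(currently reading the input node `x`). -/
def ExecOK {Q : Type} (Fo : Set Node) (Tr : Set Node) (r : Node → Node × Q)
    (y x : Node) : Mv × Q → Prop
  | (.stay, s) => ∃ j : ℕ, y ++ [j] ∈ Tr ∧ r (y ++ [j]) = (x, s)
  | (.up, s) => 1 < x.length ∧ ∃ j : ℕ, y ++ [j] ∈ Tr ∧ r (y ++ [j]) = (x.dropLast, s)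
  | (.dia n, s) => ∃ M : Finset ℕ, M.card = n + 1 ∧
      ∀ c ∈ M, x ++ [c] ∈ Fo ∧ ∃ j : ℕ, y ++ [j] ∈ Tr ∧ r (y ++ [j]) = (x ++ [c], s)
  | (.box n, s) => ∃ M : Finset ℕ, M.card ≤ n ∧
      ∀ c : ℕ, x ++ [c] ∈ Fo → c ∉ M →
        ∃ j : ℕ, y ++ [j] ∈ Tr ∧ r (y ++ [j]) = (x ++ [c], s)
  | (.someRoot, s) => ∃ cr ∈ rootsOf Fo, ∃ j : ℕ, y ++ [j] ∈ Tr ∧ r (y ++ [j]) = (cr, s)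
  | (.allRoots, s) => ∀ cr ∈ rootsOf Fo, ∃ j : ℕ, y ++ [j] ∈ Tr ∧ r (y ++ [j]) = (cr, s)

/-- A run `⟨T_r, r⟩` of a FEA on the labeled forest `⟨Fo, V⟩`. -/
structure FEA.IsRun {A Q : Type} (M : FEA A Q) (Fo : Set Node) (V : Node → A)
    (Tr : Set Node) (r : Node → Node × Q) : Prop where
  tree : IsTree Tr
  start : ∀ z ∈ Tr, z.length = 1 → (r z).1 ∈ rootsOf Fo ∧ (r z).2 = M.init
  step : ∀ y ∈ Tr, ∃ S : Set (Mv × Q),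
      (M.δ (r y).2 (V (r y).1)).sats S ∧ ∀ ds ∈ S, ExecOK Fo Tr r y (r y).1 ds

/-- An infinite path of the tree `Tr` starting at its root. -/
def IsInfPath (Tr : Set Node) (p : ℕ → Node) : Prop :=
  p 0 ∈ Tr ∧ (p 0).length = 1 ∧ ∀ i : ℕ, p (i + 1) ∈ Tr ∧ IsChild (p i) (p (i + 1))

/-- `ParityOK k F I`: the minimal (1-based) index `i` with `I ∩ F_i ≠ ∅` is even
(the zero-based index is odd). -/
def ParityOK {Q : Type} (k : ℕ) (F : Fin k → Set Q) (I : Set Q) : Prop :=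
  ∃ j : Fin k, (I ∩ F j).Nonempty ∧ Odd j.val ∧
    ∀ j' : Fin k, (I ∩ F j').Nonempty → j ≤ j'

/-- The set of states occurring infinitely often along a path of a run. -/
def InfStates {Q : Type} (r : Node → Node × Q) (p : ℕ → Node) : Set Q :=
  {q | ∀ n : ℕ, ∃ i : ℕ, n ≤ i ∧ (r (p i)).2 = q}

/-- Acceptance of a labeled forest by a FEA. -/
def FEA.Accepts {A Q : Type} (M : FEA A Q) (Fo : Set Node) (V : Node → A) : Prop :=
  ∃ (Tr : Set Node) (r : Node → Node × Q),
    M.IsRun Fo V Tr r ∧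
    ∀ p : ℕ → Node, IsInfPath Tr p → ParityOK M.k M.F (InfStates r p)

/-- A two-way graded alternating parity tree automaton (2GAPT): a FEA that runs on
trees and uses only the moves in `D_b⁻` (no jumps to roots). -/
structure GAPT2 (A Q : Type) extends FEA A Q where
  htw : ∀ q a, (δ q a).All (fun m => m.1.TwoWay)

/-- Acceptance of a labeled tree by a 2GAPT (a tree being a forest with a single root,
the run conditions are those of FEAs). -/
def GAPT2.Accepts {A Q : Type} (M : GAPT2 A Q) (T : Set Node) (V : Node → A) : Prop :=
  M.toFEA.Accepts T V
/-! ### Graded nondeterministic parity tree automata (GNPTs) -/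

/-- Boolean formulas over variables of type `Y`. -/
inductive BForm (Y : Type) where
  | tru
  | fls
  | var (y : Y)
  | not (f : BForm Y)
  | and (f g : BForm Y)
  | or (f g : BForm Y)

/-- A subset of `Y` (a letter of `2^Y`) satisfies a Boolean formula. -/
def BForm.holds {Y : Type} (s : Set Y) : BForm Y → Prop
  | .tru => True
  | .fls => False
  | .var y => y ∈ s
  | .not f => ¬ f.holds s
  | .and f g => f.holds s ∧ g.holds s
  | .or f g => f.holds s ∨ g.holds s

/-- A constraint pair `⟨θ, ξ⟩`: a Boolean formula together with a bound
`(>, n)` (encoded `(true, n)`) or `(≤, n)` (encoded `(false, n)`). -/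
abbrev CPair (Y : Type) := BForm Y × Bool × ℕ

/-- A `b`-counting constraint: a finite set (list) of constraint pairs. -/
abbrev CConstr (Y : Type) := List (CPair Y)

/-- A word, given by an index set `I` and letters `f i ∈ 2^Y` for `i ∈ I`,
satisfies a constraint pair. (Only the number of occurrences of letters satisfying
`θ` matters, not their order.) -/
def CPairSat {ι Y : Type} (I : Set ι) (f : ι → Set Y) : CPair Y → Prop
  | (θ, true, n) => CardGT {i ∈ I | θ.holds (f i)} n
  | (θ, false, n) => CardLE {i ∈ I | θ.holds (f i)} n

/-- A word satisfies a counting constraint if it satisfies every pair in it. -/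
def CSat {ι Y : Type} (I : Set ι) (f : ι → Set Y) (C : CConstr Y) : Prop :=
  ∀ p ∈ C, CPairSat I f p

/-- A graded nondeterministic parity tree automaton (GNPT) over the alphabet `A`:
the states form a finite set `Q ⊆ 2^Y` for a finite variable set `Y`, the transition
function maps a state and a letter to a `b`-counting constraint of cardinality at most
`log |Q|`, and acceptance is by a parity condition `F₁ ⊆ … ⊆ F_k`. -/
structure GNPT (A Y : Type) where
  finY : Finite Y
  b : ℕ
  Q : Set (Set Y)
  finQ : Q.Finite
  δ : Set Y → A → CConstr Y
  hb : ∀ q ∈ Q, ∀ a, ∀ p ∈ δ q a, p.2.2 ≤ b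
  hsize : ∀ q ∈ Q, ∀ a, (δ q a).length ≤ Nat.log 2 (Nat.card Q)
  init : Set Y
  hinit : init ∈ Q
  k : ℕ
  F : Fin k → Set (Set Y)
  Fmono : Monotone F

namespace GNPT

variable {A Y : Type}

/-- A run of a GNPT on a labeled tree `⟨T, V⟩`: a `Q`-labeling `r` of the same tree `T`
such that the root is labeled by the initial state and, at every node, the word of
labels of its successors satisfies the corresponding counting constraint. -/
def IsRun (M : GNPT A Y) (T : Set Node) (V : Node → A) (r : Node → Set Y) : Prop :=
  (∀ x ∈ T, r x ∈ M.Q) ∧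
  (∀ x ∈ T, x.length = 1 → r x = M.init) ∧
  ∀ x ∈ T, CSat {c : ℕ | x ++ [c] ∈ T} (fun c => r (x ++ [c])) (M.δ (r x) (V x))

/-- Acceptance of a labeled tree by a GNPT. -/
def Accepts (M : GNPT A Y) (T : Set Node) (V : Node → A) : Prop :=
  ∃ r : Node → Set Y, M.IsRun T V r ∧
    ∀ p : ℕ → Node, IsInfPath T p →
      ParityOK M.k M.F {s | ∀ n : ℕ, ∃ i : ℕ, n ≤ i ∧ r (p i) = s}

/-- The language of a GNPT is empty: it accepts no labeled tree. -/
def LEmpty (M : GNPT A Y) : Prop :=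
  ¬ ∃ (T : Set Node) (V : Node → A), IsTree T ∧ M.Accepts T V

/-- A `Forall` GNPT: every transition requires all successors to carry one
designated state. -/
def IsForall (M : GNPT A Y) : Prop :=
  ∀ q ∈ M.Q, ∀ a : A, ∃ q' ∈ M.Q, ∃ θ : BForm Y,
    (∀ s : Set Y, θ.holds s ↔ s = q') ∧ M.δ q a = [(θ.not, false, 0)]

/-- A `Safety` GNPT: there is no acceptance condition, i.e. the parity condition
accepts every infinite path. -/
def IsSafety (M : GNPT A Y) : Prop :=
  ∀ I : Set (Set Y), I.Nonempty → ParityOK M.k M.F I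

end GNPT

/-!
Let the product automaton run `A₁` on the `Y₁`-part and `A₂` on the `Y₂`-part of its states
`q₁ ∪ q₂ ⊆ Y₁ ⊕ Y₂`, conjoining the two transition constraints, and inherit the parity
condition of `A₁`. A run of the product is then exactly a pair of runs, and since every run of
`A₂` is accepting, it is accepting iff its first component is. The `Forall` constraint of `A₁`
is a single pair with bound `0`, so for `n₁ ≥ 2` the conjunction has at most
`1 + log n₂ ≤ log (n₁ n₂)` pairs, and its counting bound is `b₂`.
-/

lemma cardLE_zero_of_eq_empty {α : Type*} {s : Set α} (hs : s = ∅) : CardLE s 0 :=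
  ⟨∅, by simp [hs]⟩

lemma IsInfPath.mem {T : Set Node} {p : ℕ → Node} (hp : IsInfPath T p) (i : ℕ) : p i ∈ T := by
  cases i with
  | zero => exact hp.1
  | succ i => exact (hp.2.2 i).1

section Frequently

variable {α β : Type*}

lemma exists_frequently_eq_of_frequently {u : ℕ → α} (hu : (Set.range u).Finite) {P : α → Prop}
    (h : ∀ n, ∃ i, n ≤ i ∧ P (u i)) : ∃ a, P a ∧ ∀ n, ∃ i, n ≤ i ∧ u i = a := by
  simp_rw [← Filter.frequently_atTop, Nat.frequently_atTop_iff_infinite] at h ⊢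
  by_contra! hfin
  refine h (((hu.inter_of_left {a | P a}).biUnion fun a ha => hfin a ha.2).subset ?_)
  intro i hi
  exact Set.mem_biUnion ⟨Set.mem_range_self i, hi⟩ rfl

lemma setOf_frequently_nonempty {u : ℕ → α} (hu : (Set.range u).Finite) :
    {a | ∀ n, ∃ i, n ≤ i ∧ u i = a}.Nonempty := by
  obtain ⟨a, -, ha⟩ := exists_frequently_eq_of_frequently hu (P := fun _ => True)
    fun n => ⟨n, le_rfl, trivial⟩
  exact ⟨a, ha⟩

lemma image_setOf_frequently {u : ℕ → α} (hu : (Set.range u).Finite) (f : α → β) :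
    f '' {a | ∀ n, ∃ i, n ≤ i ∧ u i = a} = {b | ∀ n, ∃ i, n ≤ i ∧ f (u i) = b} := by
  ext b
  constructor
  · rintro ⟨a, ha, rfl⟩ n
    obtain ⟨i, hi, rfl⟩ := ha n
    exact ⟨i, hi, rfl⟩
  · intro hb
    obtain ⟨a, rfl, ha⟩ := exists_frequently_eq_of_frequently hu (P := (f · = b)) hb
    exact ⟨a, ha, rfl⟩

end Frequently

lemma parityOK_preimage_iff {Q Q' : Type} {k : ℕ} {F : Fin k → Set Q} (f : Q' → Q)
    (I : Set Q') : ParityOK k (fun j => f ⁻¹' F j) I ↔ ParityOK k F (f '' I) := by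
  simp only [ParityOK, Set.image_inter_nonempty_iff]

namespace BForm

variable {Y Z : Type}

def map (f : Y → Z) : BForm Y → BForm Z
  | .tru => .tru
  | .fls => .fls
  | .var y => .var (f y)
  | .not θ => .not (θ.map f)
  | .and θ η => .and (θ.map f) (η.map f)
  | .or θ η => .or (θ.map f) (η.map f)

@[simp]
lemma holds_map (f : Y → Z) (θ : BForm Y) (s : Set Z) :
    (θ.map f).holds s ↔ θ.holds (f ⁻¹' s) := by
  induction θ <;> simp [map, holds, *]

end BForm

section Constraints

variable {ι Y Z : Type}

def CPair.map (f : Y → Z) (p : CPair Y) : CPair Z := (p.1.map f, p.2)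

lemma cPairSat_map (f : Y → Z) (I : Set ι) (g : ι → Set Z) (p : CPair Y) :
    CPairSat I g (p.map f) ↔ CPairSat I (fun i => f ⁻¹' g i) p := by
  obtain ⟨θ, _ | _, n⟩ := p <;> simp [CPair.map, CPairSat]

lemma cSat_map (f : Y → Z) (I : Set ι) (g : ι → Set Z) (C : CConstr Y) :
    CSat I g (C.map (CPair.map f)) ↔ CSat I (fun i => f ⁻¹' g i) C := by
  simp only [CSat, List.forall_mem_map, cPairSat_map]

lemma cSat_append (I : Set ι) (g : ι → Set Y) (C D : CConstr Y) :
    CSat I g (C ++ D) ↔ CSat I g C ∧ CSat I g D :=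
  List.forall_mem_append

end Constraints

lemma Nat.log_two_add_one_le_log_mul {a m : ℕ} (ha : 2 ≤ a) (hm : m ≠ 0) :
    Nat.log 2 m + 1 ≤ Nat.log 2 (a * m) :=
  calc Nat.log 2 m + 1 = Nat.log 2 (m * 2) := (Nat.log_mul_base one_lt_two hm).symm
    _ ≤ Nat.log 2 (a * m) := Nat.log_mono_right (by rw [mul_comm]; exact Nat.mul_le_mul_right m ha)

lemma eq_sumElim_iff {Y₁ Y₂ : Type} {s : Set (Y₁ ⊕ Y₂)} {a : Set Y₁} {b : Set Y₂} :
    s = Sum.elim a b ↔ Sum.inl ⁻¹' s = a ∧ Sum.inr ⁻¹' s = b := by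
  constructor
  · rintro rfl
    exact ⟨rfl, rfl⟩
  · rintro ⟨rfl, rfl⟩
    ext (_ | _) <;> rfl

namespace GNPT

variable {A Y Y₁ Y₂ : Type}

lemma IsRun.finite_range_path {M : GNPT A Y} {T : Set Node} {V : Node → A} {r : Node → Set Y}
    (hr : M.IsRun T V r) {p : ℕ → Node} (hp : IsInfPath T p) :
    (Set.range fun i => r (p i)).Finite :=
  M.finQ.subset (Set.range_subset_iff.2 fun i => hr.1 _ (hp.mem i))

lemma IsSafety.accepts_iff {M : GNPT A Y} (hM : M.IsSafety) {T : Set Node} {V : Node → A} :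
    M.Accepts T V ↔ ∃ r, M.IsRun T V r :=
  ⟨fun ⟨r, hr, _⟩ => ⟨r, hr⟩, fun ⟨r, hr⟩ =>
    ⟨r, hr, fun _ hp => hM _ (setOf_frequently_nonempty (hr.finite_range_path hp))⟩⟩

section Forall

variable {M : GNPT A Y} {q : Set Y}

lemma IsForall.length_δ (hM : M.IsForall) (hq : q ∈ M.Q) (a : A) : (M.δ q a).length = 1 := by
  obtain ⟨q', -, θ, -, hδ⟩ := hM q hq a
  simp [hδ]

lemma IsForall.bound_eq_zero (hM : M.IsForall) (hq : q ∈ M.Q) (a : A) {p : CPair Y}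
    (hp : p ∈ M.δ q a) : p.2.2 = 0 := by
  obtain ⟨q', -, θ, -, hδ⟩ := hM q hq a
  simp_all

lemma IsForall.cSat_of_subsingleton (hM : M.IsForall) (hq : q ∈ M.Q) (a : A)
    (hQ : M.Q.Subsingleton) {ι : Type} {I : Set ι} {f : ι → Set Y} (hf : ∀ i ∈ I, f i ∈ M.Q) :
    CSat I f (M.δ q a) := by
  obtain ⟨q', hq', θ, hθ, hδ⟩ := hM q hq a
  simp only [hδ, CSat, List.mem_singleton, forall_eq, CPairSat, BForm.holds]
  exact cardLE_zero_of_eq_empty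
    (Set.eq_empty_of_forall_notMem fun i ⟨hi, hθi⟩ => hθi ((hθ _).2 (hQ (hf i hi) hq')))

end Forall

def interQ (M₁ : GNPT A Y₁) (M₂ : GNPT A Y₂) : Set (Set (Y₁ ⊕ Y₂)) :=
  {s | Sum.inl ⁻¹' s ∈ M₁.Q ∧ Sum.inr ⁻¹' s ∈ M₂.Q}

lemma card_interQ (M₁ : GNPT A Y₁) (M₂ : GNPT A Y₂) :
    Nat.card (interQ M₁ M₂) = Nat.card M₁.Q * Nat.card M₂.Q := by
  rw [← Nat.card_prod, ← Nat.card_congr (Equiv.Set.prod M₁.Q M₂.Q)]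
  exact Nat.card_congr ((Equiv.sumArrowEquivProdArrow Y₁ Y₂ Prop).subtypeEquiv fun _ => Iff.rfl)

lemma finite_interQ (M₁ : GNPT A Y₁) (M₂ : GNPT A Y₂) : (interQ M₁ M₂).Finite :=
  (M₁.finQ.prod M₂.finQ).preimage (Equiv.sumArrowEquivProdArrow Y₁ Y₂ Prop).injective.injOn

/-- A single-state `M₁` is left out: its `Forall` constraint then holds for every labelling by
states, and keeping it could exceed the budget of `log |Q|` pairs. -/
noncomputable def interδ (M₁ : GNPT A Y₁) (M₂ : GNPT A Y₂) (s : Set (Y₁ ⊕ Y₂)) (a : A) :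
    CConstr (Y₁ ⊕ Y₂) :=
  (if 2 ≤ Nat.card M₁.Q then (M₁.δ (Sum.inl ⁻¹' s) a).map (CPair.map Sum.inl) else []) ++
    (M₂.δ (Sum.inr ⁻¹' s) a).map (CPair.map Sum.inr)

lemma cSat_interδ_iff {M₁ : GNPT A Y₁} {M₂ : GNPT A Y₂} {ι : Type} {I : Set ι}
    {g : ι → Set (Y₁ ⊕ Y₂)} {s : Set (Y₁ ⊕ Y₂)} {a : A} :
    CSat I g (interδ M₁ M₂ s a) ↔
      (2 ≤ Nat.card M₁.Q → CSat I (fun i => Sum.inl ⁻¹' g i) (M₁.δ (Sum.inl ⁻¹' s) a)) ∧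
        CSat I (fun i => Sum.inr ⁻¹' g i) (M₂.δ (Sum.inr ⁻¹' s) a) := by
  by_cases hn : 2 ≤ Nat.card M₁.Q <;>
    simp only [interδ, hn, ↓reduceIte, cSat_append, cSat_map, forall_const, false_implies,
      true_and, and_iff_right_iff_imp]
  exact fun _ _ h => absurd h List.not_mem_nil

variable {M₁ : GNPT A Y₁} {M₂ : GNPT A Y₂}

lemma bound_interδ_le (h₁ : M₁.IsForall) :
    ∀ s ∈ interQ M₁ M₂, ∀ a, ∀ p ∈ interδ M₁ M₂ s a, p.2.2 ≤ M₂.b := by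
  intro s hs a p hp
  simp only [interδ, List.mem_append, List.mem_map] at hp
  rcases hp with hp | ⟨p, hp, rfl⟩
  · split_ifs at hp
    · obtain ⟨q, hq, rfl⟩ := List.mem_map.1 hp
      exact (h₁.bound_eq_zero hs.1 a hq).trans_le (Nat.zero_le _)
    · exact absurd hp List.not_mem_nil
  · exact M₂.hb _ hs.2 a p hp

lemma length_interδ_le (h₁ : M₁.IsForall) :
    ∀ s ∈ interQ M₁ M₂, ∀ a, (interδ M₁ M₂ s a).length ≤ Nat.log 2 (Nat.card (interQ M₁ M₂)) := by
  intro s hs a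
  have := M₁.finQ.to_subtype
  have : Nonempty M₁.Q := ⟨⟨_, M₁.hinit⟩⟩
  have := M₂.finQ.to_subtype
  have : Nonempty M₂.Q := ⟨⟨_, M₂.hinit⟩⟩
  have hlen₂ := M₂.hsize _ hs.2 a
  rw [card_interQ]
  by_cases hn : 2 ≤ Nat.card M₁.Q
  · simp only [interδ, hn, ↓reduceIte, List.length_append, List.length_map, h₁.length_δ hs.1]
    linarith [Nat.log_two_add_one_le_log_mul hn (Nat.card_pos (α := M₂.Q)).ne']
  · simp only [interδ, hn, ↓reduceIte, List.length_append, List.length_map, List.length_nil,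
      zero_add]
    exact hlen₂.trans (Nat.log_mono_right (Nat.le_mul_of_pos_left _ Nat.card_pos))

noncomputable def inter (M₁ : GNPT A Y₁) (M₂ : GNPT A Y₂) (h₁ : M₁.IsForall) :
    GNPT A (Y₁ ⊕ Y₂) where
  finY := have := M₁.finY; have := M₂.finY; inferInstance
  b := M₂.b
  Q := interQ M₁ M₂
  finQ := finite_interQ M₁ M₂
  δ := interδ M₁ M₂
  hb := bound_interδ_le h₁
  hsize := length_interδ_le h₁
  init := Sum.elim M₁.init M₂.init
  hinit := ⟨M₁.hinit, M₂.hinit⟩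
  k := M₁.k
  F j := Set.preimage Sum.inl ⁻¹' M₁.F j
  Fmono _ _ hij := Set.preimage_mono (M₁.Fmono hij)

lemma isRun_inter_iff (h₁ : M₁.IsForall) {T : Set Node} {V : Node → A}
    {r : Node → Set (Y₁ ⊕ Y₂)} :
    (inter M₁ M₂ h₁).IsRun T V r ↔
      M₁.IsRun T V (fun x => Sum.inl ⁻¹' r x) ∧ M₂.IsRun T V (fun x => Sum.inr ⁻¹' r x) := by
  constructor
  · rintro ⟨hQ, hinit, hstep⟩
    have hQ₁ : ∀ x ∈ T, Sum.inl ⁻¹' r x ∈ M₁.Q := fun x hx => (hQ x hx).1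
    refine ⟨⟨hQ₁, fun x hx h => (eq_sumElim_iff.1 (hinit x hx h)).1, fun x hx => ?_⟩,
      fun x hx => (hQ x hx).2, fun x hx h => (eq_sumElim_iff.1 (hinit x hx h)).2,
      fun x hx => (cSat_interδ_iff.1 (hstep x hx)).2⟩
    by_cases hn : 2 ≤ Nat.card M₁.Q
    · exact (cSat_interδ_iff.1 (hstep x hx)).1 hn
    · have := M₁.finQ.to_subtype
      have hsub : M₁.Q.Subsingleton :=
        (Set.subsingleton_coe M₁.Q).1 (Finite.card_le_one_iff_subsingleton.1 (by omega))
      exact h₁.cSat_of_subsingleton (hQ₁ x hx) _ hsub fun c hc => hQ₁ _ hc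
  · rintro ⟨⟨hQ₁, hinit₁, hstep₁⟩, hQ₂, hinit₂, hstep₂⟩
    exact ⟨fun x hx => ⟨hQ₁ x hx, hQ₂ x hx⟩,
      fun x hx h => eq_sumElim_iff.2 ⟨hinit₁ x hx h, hinit₂ x hx h⟩,
      fun x hx => cSat_interδ_iff.2 ⟨fun _ => hstep₁ x hx, hstep₂ x hx⟩⟩

lemma accepts_inter_iff (h₁ : M₁.IsForall) (h₂ : M₂.IsSafety) {T : Set Node} {V : Node → A} :
    (inter M₁ M₂ h₁).Accepts T V ↔ M₁.Accepts T V ∧ M₂.Accepts T V := by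
  rw [h₂.accepts_iff]
  constructor
  · rintro ⟨r, hr, hpar⟩
    obtain ⟨hr₁, hr₂⟩ := (isRun_inter_iff h₁).1 hr
    refine ⟨⟨_, hr₁, fun p hp => ?_⟩, _, hr₂⟩
    rw [← image_setOf_frequently (hr.finite_range_path hp), ← parityOK_preimage_iff]
    exact hpar p hp
  · rintro ⟨⟨r₁, hr₁, hpar⟩, r₂, hr₂⟩
    have hr : (inter M₁ M₂ h₁).IsRun T V fun x => Sum.elim (r₁ x) (r₂ x) :=
      (isRun_inter_iff h₁).2 ⟨hr₁, hr₂⟩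
    refine ⟨_, hr, fun p hp => (parityOK_preimage_iff _ _).2 ?_⟩
    rw [image_setOf_frequently (hr.finite_range_path hp)]
    exact hpar p hp

end GNPT

/-- **Lemma 4.** Given a `Forall` GNPT `A₁` with `n₁` states and index `k₁` and a
`Safety` GNPT `A₂` with `n₂` states and counting bound `b₂` over the same alphabet,
there is a GNPT `A` with `n₁·n₂` states, index `k₁` and counting bound `b₂` such that
`L(A) = L(A₁) ∩ L(A₂)`. -/
theorem forall_safety_intersection
    {A Y₁ Y₂ : Type} (M₁ : GNPT A Y₁) (M₂ : GNPT A Y₂)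
    (h₁ : M₁.IsForall) (h₂ : M₂.IsSafety) :
    ∃ (Y : Type) (M : GNPT A Y),
      Nat.card M.Q = Nat.card M₁.Q * Nat.card M₂.Q ∧
      M.k = M₁.k ∧ M.b = M₂.b ∧
      ∀ (T : Set Node) (V : Node → A), IsTree T →
        (M.Accepts T V ↔ M₁.Accepts T V ∧ M₂.Accepts T V) :=
  ⟨Y₁ ⊕ Y₂, GNPT.inter M₁ M₂ h₁, GNPT.card_interQ M₁ M₂, rfl, rfl,
    fun _ _ _ => GNPT.accepts_inter_iff h₁ h₂⟩
end
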